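/- Let m ∈ [-1, 0], β > 0, and h ≥ D₀ > 0 with 0 ≤ D(q) ≤ D₀. Under the self-consistency equation (1/N) Σ_q (-m)/(e^{2β(h - m D(q))} - 1) = (1+m)/2, one has m ≤ -1 + 2/(e^{2βD₀} - 1). -/

import Mathlib

/-!
Since `m ≤ 0 ≤ D q`, every mode costs at least `h - m D(q) ≥ D₀`, so each term of the
self-consistency sum is at most `-m / (E - 1)` with `E = e^{2βD₀}`. Averaging gives
`(1 + m) / 2 ≤ -m / (E - 1)`, which is linear in `m` and solves to the sharper bound
`m ≤ -1 + 2 / (E + 1)`.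
-/

open Finset

lemma Fintype.inv_card_mul_sum_le {ι : Type*} [Fintype ι] [Nonempty ι] {f : ι → ℝ} {c : ℝ}
    (hf : ∀ i, f i ≤ c) : 1 / (Fintype.card ι : ℝ) * ∑ i, f i ≤ c := by
  have hcard : (0 : ℝ) < Fintype.card ι := by exact_mod_cast Fintype.card_pos
  rw [one_div_mul_eq_div, div_le_iff₀ hcard, mul_comm]
  simpa using Finset.sum_le_sum fun i (_ : i ∈ univ) => hf i

lemma div_exp_sub_one_le_div_exp_sub_one {a x y : ℝ} (ha : 0 ≤ a) (hx : 0 < x) (hxy : x ≤ y) :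
    a / (Real.exp y - 1) ≤ a / (Real.exp x - 1) :=
  div_le_div_of_nonneg_left ha (by linarith [Real.add_one_lt_exp hx.ne'])
    (by linarith [Real.exp_le_exp.mpr hxy])

lemma le_neg_one_add_two_div_of_half_le {m E : ℝ} (hE : 1 < E)
    (h : (1 + m) / 2 ≤ -m / (E - 1)) : m ≤ -1 + 2 / (E + 1) := by
  rw [le_div_iff₀ (by linarith)] at h
  rw [← sub_le_iff_le_add', le_div_iff₀ (by linarith)]
  nlinarith

theorem stmt_6_general {Q : Type*} [Fintype Q] [Nonempty Q] (m β h D₀ : ℝ) (D : Q → ℝ)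
    (hm2 : m ≤ 0) (hβ : 0 < β) (hD0pos : 0 < D₀) (hhD0 : D₀ ≤ h)
    (hD0 : ∀ q, 0 ≤ D q)
    (hself : (1 / (Fintype.card Q : ℝ)) *
      ∑ q : Q, (-m) / (Real.exp (2 * β * (h - m * D q)) - 1) = (1 + m) / 2) :
    m ≤ -1 + 2 / (Real.exp (2 * β * D₀) - 1) := by
  set E := Real.exp (2 * β * D₀)
  have hgap : (0 : ℝ) < 2 * β * D₀ := by positivity
  have hE : 1 < E := by linarith [Real.add_one_lt_exp hgap.ne']
  have hterm : ∀ q, (-m) / (Real.exp (2 * β * (h - m * D q)) - 1) ≤ -m / (E - 1) := fun q =>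
    div_exp_sub_one_le_div_exp_sub_one (neg_nonneg.mpr hm2) hgap
      (mul_le_mul_of_nonneg_left (by nlinarith [hD0 q]) (by positivity))
  calc m ≤ -1 + 2 / (E + 1) :=
        le_neg_one_add_two_div_of_half_le hE (hself ▸ Fintype.inv_card_mul_sum_le hterm)
    _ ≤ -1 + 2 / (E - 1) := by gcongr; linarith

open Finset in
/-- Self-consistency bound on the magnetization with `h ≥ D₀ > 0`:
`m ≤ -1 + 2/(e^{2βD₀} - 1)`. -/
theorem stmt_6 {Q : Type*} [Fintype Q] [Nonempty Q] (m β h D₀ : ℝ) (D : Q → ℝ)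
    (hm1 : -1 ≤ m) (hm2 : m ≤ 0) (hβ : 0 < β) (hD0pos : 0 < D₀) (hhD0 : D₀ ≤ h)
    (hD0 : ∀ q, 0 ≤ D q) (hD1 : ∀ q, D q ≤ D₀)
    (hself : (1 / (Fintype.card Q : ℝ)) *
      ∑ q : Q, (-m) / (Real.exp (2 * β * (h - m * D q)) - 1) = (1 + m) / 2) :
    m ≤ -1 + 2 / (Real.exp (2 * β * D₀) - 1) :=
  stmt_6_general m β h D₀ D hm2 hβ hD0pos hhD0 hD0 hself
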